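/- arXiv:2211.01701 — 2 statements merged into one kernel-verified Lean document; each statement's English description precedes it below -/
import Mathlib

section
/- Let G be a graph, v a vertex, and let S be a vertex-ℓ-triangle 2-club with S ⊆ N[v] and v ∈ S. Then the iterative deletion procedure on G[N[v]] that repeatedly removes a vertex lying in fewer than ℓ triangles of the current graph never deletes any vertex of S. -/
/-!
Every vertex of `S` lies in at least `ℓ` triangles inside `S`, hence in at least `ℓ` triangles of
any vertex set containing `S`. So as long as `S` survives, none of its vertices is eligible for
deletion, and by induction on the run `S` survives forever.
-/

open Finset

variable {V : Type*}

/-- `S` is a 2-club. -/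
def IsTwoClub (G : SimpleGraph V) (S : Finset V) : Prop :=
  ∀ u ∈ S, ∀ w ∈ S, ∃ p : G.Walk u w, p.length ≤ 2 ∧ ∀ x ∈ p.support, x ∈ S

/-- The number of triangles of `G[S]` containing `v`. -/
def triCountIn [Fintype V] [DecidableEq V] (G : SimpleGraph V) [DecidableRel G.Adj]
    (v : V) (S : Finset V) : ℕ :=
  ((G.cliqueFinset 3).filter (fun t => v ∈ t ∧ t ⊆ S)).card

/-- `S` is a vertex-ℓ-triangle 2-club. -/
def IsVertexTriangleTwoClub [Fintype V] [DecidableEq V] (G : SimpleGraph V)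
    [DecidableRel G.Adj] (ℓ : ℕ) (S : Finset V) : Prop :=
  IsTwoClub G S ∧ ∀ v ∈ S, ℓ ≤ triCountIn G v S

/-- One step of the deletion procedure: delete a vertex lying in fewer than `ℓ`
triangles of the current induced graph. -/
inductive DelStep [Fintype V] [DecidableEq V] (G : SimpleGraph V) [DecidableRel G.Adj]
    (ℓ : ℕ) : Finset V → Finset V → Prop
  | step (T : Finset V) (w : V) (hw : w ∈ T) (hbad : triCountIn G w T < ℓ) :
      DelStep G ℓ T (T.erase w)

section Deletion

variable [Fintype V] [DecidableEq V] {G : SimpleGraph V} [DecidableRel G.Adj] {ℓ : ℕ}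
  {S T T' : Finset V}

lemma triCountIn_mono (v : V) (h : S ⊆ T) : triCountIn G v S ≤ triCountIn G v T :=
  card_le_card <| monotone_filter_right _ fun _ _ ht => ⟨ht.1, ht.2.trans h⟩

lemma DelStep.subset_of_subset (hS : ∀ u ∈ S, ℓ ≤ triCountIn G u S) (hST : S ⊆ T)
    (h : DelStep G ℓ T T') : S ⊆ T' := by
  obtain ⟨w, -, hbad⟩ := h
  have hwS : w ∉ S := fun hw => ((hS w hw).trans (triCountIn_mono w hST)).not_gt hbad
  exact subset_erase.2 ⟨hST, hwS⟩

lemma subset_of_reflTransGen_delStep (hS : ∀ u ∈ S, ℓ ≤ triCountIn G u S) (hST : S ⊆ T)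
    (h : Relation.ReflTransGen (DelStep G ℓ) T T') : S ⊆ T' := by
  induction h with
  | refl => exact hST
  | tail _ hstep ih => exact hstep.subset_of_subset hS ih

end Deletion

theorem stmt_14_general [Fintype V] [DecidableEq V] (G : SimpleGraph V) [DecidableRel G.Adj]
    (ℓ : ℕ) (v : V) (S : Finset V)
    (hS : IsVertexTriangleTwoClub G ℓ S)
    (hSsub : S ⊆ insert v (G.neighborFinset v)) :
    ∀ T : Finset V,
      Relation.ReflTransGen (DelStep G ℓ) (insert v (G.neighborFinset v)) T → S ⊆ T :=
  fun _ h => subset_of_reflTransGen_delStep hS.2 hSsub h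

/-- If `S` is a vertex-ℓ-triangle 2-club contained in `N[v]` with `v ∈ S`, then the
iterative deletion procedure started on `N[v]` never deletes a vertex of `S`. -/
theorem stmt_14 [Fintype V] [DecidableEq V] (G : SimpleGraph V) [DecidableRel G.Adj]
    (ℓ : ℕ) (v : V) (S : Finset V)
    (hS : IsVertexTriangleTwoClub G ℓ S)
    (hSsub : S ⊆ insert v (G.neighborFinset v)) (hvS : v ∈ S) :
    ∀ T : Finset V,
      Relation.ReflTransGen (DelStep G ℓ) (insert v (G.neighborFinset v)) T → S ⊆ T :=
  stmt_14_general G ℓ v S hS hSsub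
end

section
/- Let G be a graph and S an edge-ℓ-triangle 2-club with witnessing spanning subgraph Ĝ. If an edge e ∈ Ê is deleted from a supergraph H of Ĝ in which every edge of Ê other than possibly e is present, then at the moment of deletion e is contained in at least ℓ triangles of H. Hence a procedure that only deletes edges lying in fewer than ℓ triangles of the current graph never deletes an edge of Ê (as long as all of Ê is present). -/
open Finset

variable {V : Type*}

/-- The number of triangles of `H` containing the edge `ab`, i.e. the number of
common neighbors of `a` and `b` in `H`. -/
noncomputable def edgeTriCount (H : SimpleGraph V) (a b : V) : ℕ :=
  {x | H.Adj a x ∧ H.Adj b x}.ncard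

/-- `H` witnesses that `S` is an edge-ℓ-triangle 2-club of `G`. -/
def IsWitness (G : SimpleGraph V) (ℓ : ℕ) (S : Finset V) (H : SimpleGraph V) : Prop :=
  H ≤ G ∧ (∀ a b, H.Adj a b → a ∈ S ∧ b ∈ S) ∧
    (∀ u ∈ S, ∀ w ∈ S, ∃ p : H.Walk u w, p.length ≤ 2) ∧
    (∀ a b, H.Adj a b → ℓ ≤ edgeTriCount H a b)

/-- One step of the edge-deletion procedure: delete an edge lying in fewer than `ℓ`
triangles of the current graph. -/
inductive EDelStep (ℓ : ℕ) : SimpleGraph V → SimpleGraph V → Prop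
  | step (K : SimpleGraph V) (a b : V) (hab : K.Adj a b)
      (hlow : edgeTriCount K a b < ℓ) : EDelStep ℓ K (K.deleteEdges {s(a, b)})

-- `Set.ncard` is `0` on infinite sets, hence the finiteness assumption.
theorem edgeTriCount_mono [Finite V] {H K : SimpleGraph V} (hHK : H ≤ K) (a b : V) :
    edgeTriCount H a b ≤ edgeTriCount K a b :=
  Set.ncard_le_ncard (fun _ hx => ⟨hHK hx.1, hHK hx.2⟩) (Set.toFinite _)

theorem EDelStep.le_of_le {ℓ : ℕ} {H K K' : SimpleGraph V} (hstep : EDelStep ℓ K K')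
    (hHK : H ≤ K) (htri : ∀ a b, H.Adj a b → ℓ ≤ edgeTriCount K a b) : H ≤ K' := by
  cases hstep with
  | step a b _ hlow =>
    intro u v huv
    refine (SimpleGraph.deleteEdges_adj ..).2 ⟨hHK huv, fun heq => ?_⟩
    have hab : H.Adj a b := by
      rcases Sym2.eq_iff.1 (Set.mem_singleton_iff.1 heq) with ⟨rfl, rfl⟩ | ⟨rfl, rfl⟩
      · exact huv
      · exact huv.symm
    exact (htri a b hab).not_gt hlow

theorem EDelStep.reflTransGen_le_of_le {ℓ : ℕ} {H K K' : SimpleGraph V}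
    (htri : ∀ L : SimpleGraph V, H ≤ L → ∀ a b, H.Adj a b → ℓ ≤ edgeTriCount L a b)
    (hHK : H ≤ K) (hKK' : Relation.ReflTransGen (EDelStep ℓ) K K') : H ≤ K' := by
  induction hKK' with
  | refl => exact hHK
  | tail _ hstep ih => exact hstep.le_of_le ih (htri _ ih)

/-- If `Ĝ = H` witnesses that `S` is an edge-ℓ-triangle 2-club, then in every supergraph
`K` of `H` each edge of `H` lies in at least `ℓ` triangles; hence a procedure that only
deletes edges in fewer than `ℓ` triangles of the current graph never deletes an edge of
`H` as long as all of `H`'s edges are present. -/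
theorem stmt_18 [Fintype V] (G H : SimpleGraph V) (ℓ : ℕ) (S : Finset V)
    (hW : IsWitness G ℓ S H) :
    (∀ K : SimpleGraph V, H ≤ K → ∀ a b, H.Adj a b → ℓ ≤ edgeTriCount K a b) ∧
    (∀ K K' : SimpleGraph V, H ≤ K → Relation.ReflTransGen (EDelStep ℓ) K K' → H ≤ K') := by
  obtain ⟨-, -, -, htri⟩ := hW
  have hsuper : ∀ K : SimpleGraph V, H ≤ K → ∀ a b, H.Adj a b → ℓ ≤ edgeTriCount K a b :=
    fun K hHK a b hab => (htri a b hab).trans (edgeTriCount_mono hHK a b)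
  exact ⟨hsuper, fun K K' hHK hKK' => EDelStep.reflTransGen_le_of_le hsuper hHK hKK'⟩
end
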